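/- The commutative ℂ-algebra ℂ[t, t⁻¹, u]/(u² - t² - 4t) is isomorphic as a ℂ-algebra to the localization of the polynomial ring ℂ[s] away from s and s-1, i.e., to ℂ[s, s⁻¹, (s-1)⁻¹]. -/

import Mathlib

/-- The relation ideal (u² - t² - 4t), where u is `Polynomial.X` over the
Laurent polynomial ring ℂ[t, t⁻¹]. -/
noncomputable def relIdeal : Ideal (Polynomial (LaurentPolynomial ℂ)) :=
  Ideal.span {Polynomial.X ^ 2 -
    Polynomial.C (LaurentPolynomial.T 2 + 4 * LaurentPolynomial.T 1)}

/-- The three-point ring ℂ[t, t⁻¹, u]/(u² - t² - 4t). -/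
noncomputable abbrev ThreePointRing : Type :=
  Polynomial (LaurentPolynomial ℂ) ⧸ relIdeal

/-- ℂ[s, s⁻¹, (s-1)⁻¹]: the localization of ℂ[s] at the multiplicative set
generated by s and s - 1. -/
noncomputable abbrev RationalRing : Type :=
  Localization (Submonoid.closure {Polynomial.X, Polynomial.X - 1} :
    Submonoid (Polynomial ℂ))

/-!
An algebra map out of `ℂ[t, t⁻¹, u]/(u² - t² - 4t)` is a unit `τ` together with some `υ` such
that `υ² = τ² + 4τ`; an algebra map out of `ℂ[s, s⁻¹, (s-1)⁻¹]` is a unit `σ` such that `σ - 1` is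
a unit. Over any commutative ring in which `2` is invertible these data correspond to each other:
`σ ↦ (σ + σ⁻¹ - 2, σ - σ⁻¹)`, with inverse `(τ, υ) ↦ (τ + 2 + υ)/2`, whose inverse in turn is
`(τ + 2 - υ)/2`. Since `σ + σ⁻¹ - 2 = (σ - 1)² σ⁻¹`, the unit conditions match as well.
Applied to the generators of the two rings this gives mutually inverse algebra maps.
-/

open Polynomial
open scoped LaurentPolynomial

namespace LaurentPolynomial

variable {R A : Type*} [CommSemiring R] [Semiring A] [Algebra R A]

noncomputable def evalUnit (x : Aˣ) : R[T;T⁻¹] →ₐ[R] A :=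
  AddMonoidAlgebra.lift R A ℤ ((Units.coeHom A).comp (zpowersHom Aˣ x))

@[simp]
theorem evalUnit_T (x : Aˣ) (n : ℤ) : evalUnit (R := R) x (T n) = ↑(x ^ n) := by
  rw [evalUnit, T, AddMonoidAlgebra.lift_single, one_smul]
  rfl

theorem algHom_ext {f g : R[T;T⁻¹] →ₐ[R] A} (h : f (T 1) = g (T 1)) : f = g :=
  (AddMonoidAlgebra.lift R A ℤ).symm.injective <| MonoidHom.ext_mint h

end LaurentPolynomial

open LaurentPolynomial (T evalUnit)

namespace Units

variable {A B F : Type*} [CommRing A] [CommRing B] [FunLike F A B] [RingHomClass F A B]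

theorem sub_inv_sq (σ : Aˣ) :
    ((σ : A) - ↑σ⁻¹) ^ 2 = ((σ : A) + ↑σ⁻¹ - 2) ^ 2 + 4 * ((σ : A) + ↑σ⁻¹ - 2) := by
  linear_combination (-4 : A) * σ.mul_inv

theorem isUnit_add_inv_sub_two_iff (σ : Aˣ) :
    IsUnit ((σ : A) + ↑σ⁻¹ - 2) ↔ IsUnit ((σ : A) - 1) := by
  have h : (σ : A) + ↑σ⁻¹ - 2 = ((σ : A) - 1) ^ 2 * ↑σ⁻¹ := by
    linear_combination (2 - (σ : A)) * σ.mul_inv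
  rw [h, IsUnit.mul_iff, isUnit_pow_iff two_ne_zero, and_iff_left σ⁻¹.isUnit]

theorem map_add_inv_sub_two (f : F) (σ : Aˣ) :
    f ((σ : A) + ↑σ⁻¹ - 2) = ↑(map (f : A →* B) σ) + ↑(map (f : A →* B) σ)⁻¹ - 2 := by
  simp [map_ofNat]

theorem map_sub_inv (f : F) (σ : Aˣ) :
    f ((σ : A) - ↑σ⁻¹) = ↑(map (f : A →* B) σ) - ↑(map (f : A →* B) σ)⁻¹ := by
  simp

variable [Invertible (2 : A)] {τ υ : A}

def ofSqEq (h : υ ^ 2 = τ ^ 2 + 4 * τ) : Aˣ where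
  val := ⅟2 * (τ + 2 + υ)
  inv := ⅟2 * (τ + 2 - υ)
  val_inv := by linear_combination (-(⅟2 : A) ^ 2) * h + (⅟2 * 2 + 1) * invOf_mul_self (2 : A)
  inv_val := by linear_combination (-(⅟2 : A) ^ 2) * h + (⅟2 * 2 + 1) * invOf_mul_self (2 : A)

theorem ofSqEq_add_inv (h : υ ^ 2 = τ ^ 2 + 4 * τ) : (ofSqEq h : A) + ↑(ofSqEq h)⁻¹ - 2 = τ := by
  simp only [ofSqEq, val_mk, inv_mk]
  linear_combination (τ + 2) * invOf_mul_self (2 : A)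

theorem ofSqEq_sub_inv (h : υ ^ 2 = τ ^ 2 + 4 * τ) : (ofSqEq h : A) - ↑(ofSqEq h)⁻¹ = υ := by
  simp only [ofSqEq, val_mk, inv_mk]
  linear_combination υ * invOf_mul_self (2 : A)

theorem ofSqEq_eq_iff (h : υ ^ 2 = τ ^ 2 + 4 * τ) (σ : Aˣ) :
    ofSqEq h = σ ↔ (σ : A) + ↑σ⁻¹ - 2 = τ ∧ (σ : A) - ↑σ⁻¹ = υ := by
  refine ⟨by rintro rfl; exact ⟨ofSqEq_add_inv h, ofSqEq_sub_inv h⟩, ?_⟩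
  rintro ⟨rfl, rfl⟩
  ext
  simp only [ofSqEq, val_mk]
  linear_combination (σ : A) * invOf_mul_self (2 : A)

theorem map_ofSqEq [Invertible (2 : B)] (f : F) (h : υ ^ 2 = τ ^ 2 + 4 * τ) :
    map (f : A →* B) (ofSqEq h) =
      ofSqEq (τ := f τ) (υ := f υ) (by rw [← map_pow, h]; simp [map_ofNat]) := by
  have hf : f ⅟2 = ⅟2 :=
    (invOf_eq_right_inv (by rw [← map_ofNat f 2, ← map_mul, mul_invOf_self, map_one])).symm
  ext
  simp [ofSqEq, hf, map_ofNat]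

end Units

noncomputable instance {A : Type*} [Semiring A] [Algebra ℂ A] : Invertible (2 : A) :=
  (Invertible.map (algebraMap ℂ A) 2).copy 2 (map_ofNat _ 2).symm

namespace ThreePointRing

variable {A : Type*} [CommRing A] [Algebra ℂ A]

noncomputable abbrev relation : ℂ[T;T⁻¹][X] := X ^ 2 - C (T 2 + 4 * T 1)

-- `ThreePointRing` is definitionally `AdjoinRoot relation`. We work with the latter: its ring
-- structure is the one that lemmas about arbitrary commutative rings elaborate to.
noncomputable def t : AdjoinRoot relation := AdjoinRoot.of relation (T 1)

noncomputable def u : AdjoinRoot relation := AdjoinRoot.root relation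

theorem isUnit_t : IsUnit t := (LaurentPolynomial.isUnit_T 1).map (AdjoinRoot.of relation)

theorem u_sq : u ^ 2 = t ^ 2 + 4 * t := by
  have h := AdjoinRoot.eval₂_root relation
  have hT : (T 2 : ℂ[T;T⁻¹]) = T 1 ^ 2 := by simp [LaurentPolynomial.T_pow]
  rwa [eval₂_sub, eval₂_X_pow, eval₂_C, hT, map_add, map_mul, map_pow, map_ofNat,
    sub_eq_zero] at h

noncomputable def lift (τ : Aˣ) (υ : A) (h : υ ^ 2 = τ ^ 2 + 4 * τ) :
    AdjoinRoot relation →ₐ[ℂ] A :=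
  AdjoinRoot.liftAlgHom relation (evalUnit τ) υ (by simp [h, map_ofNat])

theorem lift_t (τ : Aˣ) (υ : A) (h : υ ^ 2 = τ ^ 2 + 4 * τ) : lift τ υ h t = τ :=
  (AdjoinRoot.liftAlgHom_of _ _ _ _ _).trans (by simp)

theorem lift_u (τ : Aˣ) (υ : A) (h : υ ^ 2 = τ ^ 2 + 4 * τ) : lift τ υ h u = υ :=
  AdjoinRoot.liftAlgHom_root _ _ _ _

theorem algHom_ext {f g : AdjoinRoot relation →ₐ[ℂ] A} (ht : f t = g t) (hu : f u = g u) :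
    f = g :=
  AdjoinRoot.algHom_ext' (LaurentPolynomial.algHom_ext ht) hu

noncomputable def s : (AdjoinRoot relation)ˣ := Units.ofSqEq u_sq

theorem isUnit_s_sub_one : IsUnit ((s : AdjoinRoot relation) - 1) :=
  (Units.isUnit_add_inv_sub_two_iff s).1 (by rw [s, Units.ofSqEq_add_inv]; exact isUnit_t)

end ThreePointRing

namespace RationalRing

variable {A : Type*} [CommRing A] [Algebra ℂ A]

noncomputable abbrev denominators : Submonoid ℂ[X] := Submonoid.closure {X, X - 1}

noncomputable def s : RationalRingˣ :=
  (IsLocalization.map_units RationalRing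
    (⟨X, Submonoid.subset_closure (by simp)⟩ : denominators)).unit

@[simp]
theorem val_s : (s : RationalRing) = algebraMap ℂ[X] RationalRing X := IsUnit.unit_spec _

theorem isUnit_s_sub_one : IsUnit ((s : RationalRing) - 1) := by
  rw [val_s, ← map_one (algebraMap ℂ[X] RationalRing), ← map_sub]
  exact IsLocalization.map_units RationalRing
    (⟨X - 1, Submonoid.subset_closure (by simp)⟩ : denominators)

theorem isUnit_aeval (σ : Aˣ) (hσ : IsUnit ((σ : A) - 1)) (y : denominators) :
    IsUnit (aeval (σ : A) (y : ℂ[X])) := by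
  obtain ⟨y, hy⟩ := y
  induction hy using Submonoid.closure_induction with
  | mem y hy => rcases hy with rfl | rfl <;> simp [hσ]
  | one => simp
  | mul y z _ _ hy hz => rw [map_mul]; exact hy.mul hz

noncomputable def lift (σ : Aˣ) (hσ : IsUnit ((σ : A) - 1)) : RationalRing →ₐ[ℂ] A :=
  IsLocalization.liftAlgHom (isUnit_aeval σ hσ)

theorem map_lift_s (σ : Aˣ) (hσ : IsUnit ((σ : A) - 1)) : Units.map (lift σ hσ) s = σ := by
  ext
  rw [Units.coe_map, MonoidHom.coe_coe, val_s, lift, IsLocalization.liftAlgHom_apply,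
    IsLocalization.lift_eq]
  simp

theorem algHom_ext {f g : RationalRing →ₐ[ℂ] A} (h : f s = g s) : f = g :=
  IsLocalization.algHom_ext denominators (Polynomial.algHom_ext (by simpa [Algebra.algHom] using h))

end RationalRing

open ThreePointRing RationalRing

noncomputable def ThreePointRing.toRationalRing : AdjoinRoot relation →ₐ[ℂ] RationalRing :=
  ThreePointRing.lift
    (RationalRing.s.isUnit_add_inv_sub_two_iff.2 RationalRing.isUnit_s_sub_one).unit
    (RationalRing.s - ↑RationalRing.s⁻¹) RationalRing.s.sub_inv_sq

noncomputable def RationalRing.toThreePointRing : RationalRing →ₐ[ℂ] AdjoinRoot relation :=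
  RationalRing.lift ThreePointRing.s ThreePointRing.isUnit_s_sub_one

theorem ThreePointRing.toRationalRing_t :
    toRationalRing t = ↑RationalRing.s + ↑RationalRing.s⁻¹ - 2 :=
  ThreePointRing.lift_t _ _ _

theorem ThreePointRing.toRationalRing_u :
    toRationalRing u = ↑RationalRing.s - ↑RationalRing.s⁻¹ :=
  ThreePointRing.lift_u _ _ _

theorem ThreePointRing.map_toRationalRing_s :
    Units.map toRationalRing ThreePointRing.s = RationalRing.s := by
  rw [ThreePointRing.s, Units.map_ofSqEq _ u_sq, Units.ofSqEq_eq_iff, toRationalRing_t,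
    toRationalRing_u]
  exact ⟨rfl, rfl⟩

theorem RationalRing.map_toThreePointRing_s :
    Units.map toThreePointRing RationalRing.s = ThreePointRing.s :=
  map_lift_s _ _

noncomputable def ThreePointRing.equivRationalRing : AdjoinRoot relation ≃ₐ[ℂ] RationalRing :=
  AlgEquiv.ofAlgHom toRationalRing toThreePointRing
    (RationalRing.algHom_ext <| by
      simpa using congrArg Units.val <|
        (congrArg (Units.map (toRationalRing : AdjoinRoot relation →* RationalRing))
          map_toThreePointRing_s).trans map_toRationalRing_s)
    (ThreePointRing.algHom_ext
      (by
        rw [AlgHom.comp_apply, AlgHom.id_apply, toRationalRing_t, Units.map_add_inv_sub_two,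
          map_toThreePointRing_s, ThreePointRing.s, Units.ofSqEq_add_inv])
      (by
        rw [AlgHom.comp_apply, AlgHom.id_apply, toRationalRing_u, Units.map_sub_inv,
          map_toThreePointRing_s, ThreePointRing.s, Units.ofSqEq_sub_inv]))

/-- ℂ[t, t⁻¹, u]/(u² - t² - 4t) ≅ ℂ[s, s⁻¹, (s-1)⁻¹] as ℂ-algebras. -/
theorem threePointRing_iso : Nonempty (ThreePointRing ≃ₐ[ℂ] RationalRing) :=
  ⟨equivRationalRing⟩
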